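/- Let q, q' be positive integers and A > 0. The number of integer pairs (b, b') with 1 ≤ b ≤ q, 1 ≤ b' ≤ q', and 0 < |b·q' − b'·q| ≤ A is at most 2A. -/

import Mathlib

/-- The number of integer pairs `(b, b')` with `1 ≤ b ≤ q`, `1 ≤ b' ≤ q'` and
`0 < |b·q' − b'·q| ≤ A` is at most `2A`. -/
theorem stmt_0 (q q' : ℕ) (hq : 0 < q) (hq' : 0 < q') (A : ℝ) (hA : 0 < A) :
    (((Finset.Icc (1 : ℤ) q ×ˢ Finset.Icc (1 : ℤ) q').filter
      (fun p => 0 < |p.1 * (q' : ℤ) - p.2 * (q : ℤ)| ∧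
        ((|p.1 * (q' : ℤ) - p.2 * (q : ℤ)| : ℤ) : ℝ) ≤ A)).card : ℝ)
      ≤ 2 * A := by
  classical
  set T := (Finset.Icc (1 : ℤ) q ×ˢ Finset.Icc (1 : ℤ) q').filter
      (fun p => 0 < |p.1 * (q' : ℤ) - p.2 * (q : ℤ)| ∧
        ((|p.1 * (q' : ℤ) - p.2 * (q : ℤ)| : ℤ) : ℝ) ≤ A) with hT
  set f : ℤ × ℤ → ℤ := fun p => p.1 * (q' : ℤ) - p.2 * (q : ℤ) with hf
  set G : ℤ := (Nat.gcd q q' : ℤ) with hG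
  have hGpos : 0 < G := by
    rw [hG]; exact_mod_cast Nat.gcd_pos_of_pos_left q' hq
  have hGne : G ≠ 0 := hGpos.ne'
  have hGq : G ∣ (q : ℤ) := Int.natCast_dvd_natCast.2 (Nat.gcd_dvd_left q q')
  have hGq' : G ∣ (q' : ℤ) := Int.natCast_dvd_natCast.2 (Nat.gcd_dvd_right q q')
  set m : ℤ := (q : ℤ) / G with hm
  set m' : ℤ := (q' : ℤ) / G with hm'
  have hmq : m * G = q := Int.ediv_mul_cancel hGq
  have hm'q : m' * G = q' := Int.ediv_mul_cancel hGq'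
  have hqpos : (0 : ℤ) < (q : ℤ) := by exact_mod_cast hq
  have hmpos : 0 < m := by
    rcases lt_or_ge 0 m with h | h
    · exact h
    · nlinarith
  have hcop : IsCoprime m m' := by
    rw [Int.isCoprime_iff_gcd_eq_one]
    have h1 : m = ((q / Nat.gcd q q' : ℕ) : ℤ) := by rw [Int.natCast_ediv]
    have h2 : m' = ((q' / Nat.gcd q q' : ℕ) : ℤ) := by rw [Int.natCast_ediv]
    rw [h1, h2]
    rw [Int.gcd_natCast_natCast]; exact Nat.coprime_div_gcd_div_gcd (Nat.gcd_pos_of_pos_left q' hq)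
  -- basic facts about members of T
  have hmemT : ∀ p ∈ T, p.1 ∈ Finset.Icc (1 : ℤ) (q : ℤ) ∧ p.2 ∈ Finset.Icc (1 : ℤ) (q' : ℤ)
      ∧ f p ≠ 0 ∧ G ∣ f p ∧ |((f p : ℤ) : ℝ)| ≤ A := by
    intro p hp
    rw [hT, Finset.mem_filter, Finset.mem_product] at hp
    obtain ⟨⟨h1, h2⟩, h3, h4⟩ := hp
    refine ⟨h1, h2, ?_, ?_, ?_⟩
    · intro h0
      rw [hf] at h0
      simp only [h0] at h3
      simp at h3
    · exact dvd_sub (Dvd.dvd.mul_left hGq' p.1) (Dvd.dvd.mul_left hGq p.2)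
    · rw [← Int.cast_abs]; exact_mod_cast h4
  set M : ℤ := ⌊A / G⌋ with hM
  have hGRpos : (0 : ℝ) < (G : ℝ) := by exact_mod_cast hGpos
  have hM0 : 0 ≤ M := Int.floor_nonneg.2 (by positivity)
  -- image is small
  have himage : (T.image f).card ≤ (2 * M).toNat := by
    have hsub : ∀ v ∈ T.image f, v / G ∈ (Finset.Icc (-M) M).erase 0 := by
      intro v hv
      obtain ⟨p, hpT, rfl⟩ := Finset.mem_image.1 hv
      obtain ⟨_, _, hne, hdvd, habs⟩ := hmemT p hpT
      have hcast : ((f p / G : ℤ) : ℝ) * G = ((f p : ℤ) : ℝ) := by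
        exact_mod_cast congrArg (Int.cast : ℤ → ℝ) (Int.ediv_mul_cancel hdvd)
      have hA1 : ((f p : ℤ) : ℝ) ≤ A := (le_abs_self _).trans habs
      have hA2 : -A ≤ ((f p : ℤ) : ℝ) := neg_le_of_abs_le habs
      have hle : f p / G ≤ M := by
        rw [hM]
        apply Int.le_floor.2
        rw [le_div_iff₀ hGRpos]
        linarith
      have hge : -M ≤ f p / G := by
        rw [neg_le, hM]
        apply Int.le_floor.2
        push_cast
        rw [le_div_iff₀ hGRpos]
        linarith
      have hnz : f p / G ≠ 0 := by
        intro h0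
        apply hne
        have := Int.ediv_mul_cancel hdvd
        rw [h0] at this
        simpa using this.symm
      exact Finset.mem_erase.2 ⟨hnz, Finset.mem_Icc.2 ⟨hge, hle⟩⟩
    have hinj : Set.InjOn (fun v => v / G) (T.image f) := by
      intro v1 h1 v2 h2 heq
      obtain ⟨p1, hp1, rfl⟩ := Finset.mem_image.1 h1
      obtain ⟨p2, hp2, rfl⟩ := Finset.mem_image.1 h2
      have d1 := (hmemT p1 hp1).2.2.2.1
      have d2 := (hmemT p2 hp2).2.2.2.1
      have e1 := Int.ediv_mul_cancel d1
      have e2 := Int.ediv_mul_cancel d2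
      simp only at heq
      rw [← e1, ← e2, heq]
    have hcard := Finset.card_le_card_of_injOn _ hsub hinj
    have hz : (0 : ℤ) ∈ Finset.Icc (-M) M := Finset.mem_Icc.2 ⟨by omega, hM0⟩
    rw [Finset.card_erase_of_mem hz, Int.card_Icc] at hcard
    omega
  -- fibers are small
  have hfiber : ∀ v ∈ T.image f, (T.filter (fun p => f p = v)).card ≤ G.toNat := by
    intro v hv
    obtain ⟨p0, hp0T, hp0⟩ := Finset.mem_image.1 hv
    set S := T.filter (fun p => f p = v) with hS
    have hdvdm : ∀ p ∈ S, m ∣ p.1 - p0.1 := by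
      intro p hp
      have hpv : f p = v := (Finset.mem_filter.1 hp).2
      have hfe : f p = f p0 := hpv.trans hp0.symm
      rw [hf] at hfe
      simp only at hfe
      have heq : (p.1 - p0.1) * m' * G = (p.2 - p0.2) * m * G := by
        rw [mul_assoc, mul_assoc, hmq, hm'q]
        linear_combination hfe
      have heq2 : (p.1 - p0.1) * m' = (p.2 - p0.2) * m :=
        mul_right_cancel₀ hGne heq
      exact hcop.dvd_of_dvd_mul_right ⟨p.2 - p0.2, by linarith [heq2]⟩
    have hqdvd : m ∣ (q : ℤ) := ⟨G, hmq.symm⟩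
    have hsub : ∀ p ∈ S, ((p.1 - p0.1) % q) / m ∈ Finset.Icc (0 : ℤ) (G - 1) := by
      intro p hp
      have hx0 : 0 ≤ (p.1 - p0.1) % q := Int.emod_nonneg _ hqpos.ne'
      have hxq : (p.1 - p0.1) % q < q := Int.emod_lt_of_pos _ hqpos
      have hmx : m ∣ (p.1 - p0.1) % q := by
        rw [Int.emod_def]
        exact dvd_sub (hdvdm p hp) (Dvd.dvd.mul_right hqdvd _)
      refine Finset.mem_Icc.2 ⟨Int.ediv_nonneg hx0 hmpos.le, ?_⟩
      have : ((p.1 - p0.1) % q) / m < G := by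
        rw [Int.ediv_lt_iff_lt_mul hmpos]
        calc (p.1 - p0.1) % q < (q : ℤ) := hxq
        _ = G * m := by rw [mul_comm]; exact hmq.symm
      omega
    have hinj : Set.InjOn (fun p : ℤ × ℤ => ((p.1 - p0.1) % q) / m) S := by
      intro p1 h1 p2 h2 heq
      have hm1 : m ∣ (p1.1 - p0.1) % q := by
        rw [Int.emod_def]
        exact dvd_sub (hdvdm p1 h1) (Dvd.dvd.mul_right hqdvd _)
      have hm2 : m ∣ (p2.1 - p0.1) % q := by
        rw [Int.emod_def]
        exact dvd_sub (hdvdm p2 h2) (Dvd.dvd.mul_right hqdvd _)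
      simp only at heq
      have hxeq : (p1.1 - p0.1) % q = (p2.1 - p0.1) % q := by
        rw [← Int.ediv_mul_cancel hm1, ← Int.ediv_mul_cancel hm2, heq]
      have hqd : (q : ℤ) ∣ p1.1 - p2.1 := by
        have := Int.emod_emod_of_dvd
        have h := Int.emod_eq_emod_iff_emod_sub_eq_zero.1 hxeq
        have : (p1.1 - p0.1) - (p2.1 - p0.1) = p1.1 - p2.1 := by ring
        rw [this] at h
        exact Int.dvd_of_emod_eq_zero h
      have hb1 := Finset.mem_Icc.1 ((hmemT p1 (Finset.mem_filter.1 h1).1).1)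
      have hb2 := Finset.mem_Icc.1 ((hmemT p2 (Finset.mem_filter.1 h2).1).1)
      have hfst : p1.1 = p2.1 := by
        have habs : |p1.1 - p2.1| < q := by
          rw [abs_lt]; omega
        have := Int.eq_zero_of_abs_lt_dvd hqd habs
        omega
      have hv1 : f p1 = v := (Finset.mem_filter.1 h1).2
      have hv2 : f p2 = v := (Finset.mem_filter.1 h2).2
      have hsnd : p1.2 = p2.2 := by
        have : f p1 = f p2 := hv1.trans hv2.symm
        rw [hf] at this
        simp only at this
        have h2 : p1.2 * (q : ℤ) = p2.2 * q := by
          rw [hfst] at this; linarith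
        exact mul_right_cancel₀ hqpos.ne' h2
      exact Prod.ext hfst hsnd
    have hcard := Finset.card_le_card_of_injOn _ hsub hinj
    rw [Int.card_Icc] at hcard
    calc S.card ≤ _ := hcard
    _ ≤ G.toNat := by omega
  have hmain : T.card ≤ G.toNat * (2 * M).toNat := by
    calc T.card ≤ G.toNat * (T.image f).card :=
          Finset.card_le_mul_card_image _ _ hfiber
    _ ≤ G.toNat * (2 * M).toNat := Nat.mul_le_mul_left _ himage
  have hMA : (G : ℝ) * (M : ℝ) ≤ A := by
    have := Int.floor_le (A / G)
    rw [← hM] at this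
    calc (G : ℝ) * M = M * G := by ring
    _ ≤ (A / G) * G := by nlinarith
    _ = A := div_mul_cancel₀ A hGRpos.ne'
  calc (T.card : ℝ) ≤ ((G.toNat * (2 * M).toNat : ℕ) : ℝ) := by exact_mod_cast hmain
  _ = (G : ℝ) * (2 * M) := by
      have h1 : ((G.toNat : ℕ) : ℝ) = (G : ℝ) := by exact_mod_cast Int.toNat_of_nonneg hGpos.le
      have h2 : (((2 * M).toNat : ℕ) : ℝ) = ((2 * M : ℤ) : ℝ) := by
        exact_mod_cast Int.toNat_of_nonneg (by omega : (0:ℤ) ≤ 2 * M)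
      rw [Nat.cast_mul, h1, h2]; push_cast; ring
  _ ≤ 2 * A := by nlinarith
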